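/- arXiv:1805.03456 — 4 statements merged into one kernel-verified Lean document; each statement's English description precedes it below -/
import Mathlib

section
/- For 0 ≤ α ≤ 1, the function f(t) = t − α(t+1)/2 − √(α²(t+1)² + 4(1−2α)t)/2 is strictly increasing for t ≥ 1. (Here f(Δ) is the difference between the maximum degree Δ and the α-spectral radius of the star S_{Δ+1}.) -/
/-! The square root in `f` is `√(starDisc α t)`, the discriminant of `x² - α(t+1)x + (2α-1)t`,
whose larger root is the α-spectral radius of the star. For `s < t` the difference `f t - f s`
equals `(t - s)(1 - α/2) - (√D(t) - √D(s))/2` with `D(t) - D(s) = (t - s)(α²(t+s+2) + 4(1-2α))`,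
so monotonicity reduces to the pointwise bound `α²(t+1) + 2 - 4α < (2-α)√D(t)` for `t ≥ 1`.
Squared, this is the identity
`(2-α)² D(t) - (α²(t+1) + 2 - 4α)² = 4(1-α)(α²(t+1)² + (1-2α)(4t-1+α))`
with a positive right-hand side. -/

lemma sub_lt_mul_of_sq_sub_sq_eq {a b c d K : ℝ} (hb : 0 ≤ b) (hc : 0 < c)
    (hd : 0 < d) (h : a ^ 2 - b ^ 2 = d * K) (hK : K < c * (a + b)) : a - b < c * d := by
  rcases le_or_gt a b with hab | hab
  · nlinarith [mul_pos hc hd]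
  · have hsum : 0 < a + b := by linarith
    have : (a - b) * (a + b) < c * d * (a + b) := by nlinarith
    exact lt_of_mul_lt_mul_right this hsum.le

def starDisc (α t : ℝ) : ℝ := α ^ 2 * (t + 1) ^ 2 + 4 * (1 - 2 * α) * t

section

variable {α t : ℝ}

lemma starDisc_defect_pos (hα1 : α < 1) (ht : 1 ≤ t) :
    0 < α ^ 2 * (t + 1) ^ 2 + (1 - 2 * α) * (4 * t - 1 + α) := by
  have hslope : 0 ≤ α ^ 2 * (t + 3) + 4 * (1 - 2 * α) := by nlinarith [sq_nonneg (1 - α)]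
  have hbase : 0 < (1 - α) * (3 - 2 * α) := mul_pos (by linarith) (by linarith)
  nlinarith [mul_nonneg (sub_nonneg.2 ht) hslope]

lemma sq_lt_sq_mul_starDisc (hα1 : α < 1) (ht : 1 ≤ t) :
    (α ^ 2 * (t + 1) + 2 - 4 * α) ^ 2 < (2 - α) ^ 2 * starDisc α t := by
  have hid : (2 - α) ^ 2 * starDisc α t - (α ^ 2 * (t + 1) + 2 - 4 * α) ^ 2
      = 4 * (1 - α) * (α ^ 2 * (t + 1) ^ 2 + (1 - 2 * α) * (4 * t - 1 + α)) := by
    unfold starDisc; ring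
  have := mul_pos (mul_pos four_pos (sub_pos.2 hα1)) (starDisc_defect_pos hα1 ht)
  linarith

lemma starDisc_pos (hα1 : α < 1) (ht : 1 ≤ t) : 0 < starDisc α t := by
  have := sq_lt_sq_mul_starDisc hα1 ht
  have h2α : 0 < (2 - α) ^ 2 := by nlinarith
  exact pos_of_mul_pos_right (lt_of_le_of_lt (sq_nonneg _) this) h2α.le

lemma lt_mul_sqrt_starDisc (hα1 : α < 1) (ht : 1 ≤ t) :
    α ^ 2 * (t + 1) + 2 - 4 * α < (2 - α) * √(starDisc α t) := by
  have hsq : (α ^ 2 * (t + 1) + 2 - 4 * α) ^ 2 < ((2 - α) * √(starDisc α t)) ^ 2 := by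
    rw [mul_pow, Real.sq_sqrt (starDisc_pos hα1 ht).le]
    exact sq_lt_sq_mul_starDisc hα1 ht
  have hnonneg : 0 ≤ (2 - α) * √(starDisc α t) :=
    mul_nonneg (by linarith) (Real.sqrt_nonneg _)
  exact (le_abs_self _).trans_lt (abs_lt_of_sq_lt_sq hsq hnonneg)

lemma sqrt_starDisc_sub_lt (hα1 : α < 1) {s : ℝ} (hs : 1 ≤ s) (hst : s < t) :
    √(starDisc α t) - √(starDisc α s) < (2 - α) * (t - s) := by
  have ht : 1 ≤ t := hs.trans hst.le
  refine sub_lt_mul_of_sq_sub_sq_eq (Real.sqrt_nonneg _) (by linarith)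
    (sub_pos.2 hst) (K := α ^ 2 * (t + s + 2) + 4 * (1 - 2 * α)) ?_ ?_
  · rw [Real.sq_sqrt (starDisc_pos hα1 ht).le, Real.sq_sqrt (starDisc_pos hα1 hs).le]
    unfold starDisc; ring
  · linarith [lt_mul_sqrt_starDisc hα1 ht, lt_mul_sqrt_starDisc hα1 hs]

end

theorem stmt_9_general (α : ℝ) (hα1 : α < 1) :
    StrictMonoOn
      (fun t : ℝ => t - α * (t + 1) / 2
        - Real.sqrt (α ^ 2 * (t + 1) ^ 2 + 4 * (1 - 2 * α) * t) / 2)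
      (Set.Ici (1 : ℝ)) := by
  intro s hs t _ hst
  have := sqrt_starDisc_sub_lt hα1 hs hst
  simp only [starDisc] at this
  linarith

theorem stmt_9 (α : ℝ) (hα0 : 0 ≤ α) (hα1 : α < 1) :
    StrictMonoOn
      (fun t : ℝ => t - α * (t + 1) / 2
        - Real.sqrt (α ^ 2 * (t + 1) ^ 2 + 4 * (1 - 2 * α) * t) / 2)
      (Set.Ici (1 : ℝ)) :=
  stmt_9_general α hα1
end

section
/- Let G be a finite simple graph on n ≥ 2 vertices with maximum degree Δ and α-spectral radius ρ_α(G), where 0 ≤ α < 1. Then Δ − ρ_α(G) ≤ n − 1 − αn/2 − √(α²n² + 4(1−2α)(n−1))/2. -/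
/-!
Let `v` be a vertex of maximum degree `Δ ≥ 1`. The quadratic form of `A_α(G)` is
`∑_{uw ∈ E} (α (x_u² + x_w²) + 2 (1 - α) x_u x_w)`; for `x ≥ 0` every edge term is nonnegative, so
the Rayleigh quotient at the Perron vector of the star `S_{Δ+1}` centred at `v` gives
`ρ_α(G) ≥ ρ_α(S_{Δ+1})`. As `ρ_α(S_t)` grows with slope at most `1` for `t ≥ 2`,
`Δ - ρ_α(S_{Δ+1}) ≤ n - 1 - ρ_α(S_n)`.
-/

open Matrix Finset

section Rayleigh

variable {n : Type*} [Fintype n] [DecidableEq n]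

theorem Matrix.IsHermitian.dotProduct_mulVec_le {M : Matrix n n ℝ} (hM : M.IsHermitian) {ρ : ℝ}
    (hρ : ρ ∈ upperBounds {μ | ∃ x, x ≠ 0 ∧ M *ᵥ x = μ • x}) (x : n → ℝ) :
    x ⬝ᵥ (M *ᵥ x) ≤ ρ * (x ⬝ᵥ x) := by
  have hN : (ρ • 1 - M).IsHermitian := (isHermitian_one.smul (IsSelfAdjoint.all ρ)).sub hM
  have hPSD : (ρ • 1 - M).PosSemidef := by
    refine hN.posSemidef_iff_eigenvalues_nonneg.mpr fun i => ?_
    set u := (hN.eigenvectorBasis i).ofLp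
    have hu : u ≠ 0 := fun h =>
      hN.eigenvectorBasis.orthonormal.ne_zero i (by simpa [u] using congrArg (WithLp.toLp 2) h)
    have hMu : M *ᵥ u = (ρ - hN.eigenvalues i) • u := by
      have := hN.mulVec_eigenvectorBasis i
      rw [sub_mulVec, smul_mulVec, one_mulVec] at this
      rw [sub_smul, ← this, sub_sub_cancel]
    simpa using hρ ⟨u, hu, hMu⟩
  have := hPSD.dotProduct_mulVec_nonneg x
  rw [star_trivial, sub_mulVec, smul_mulVec, one_mulVec, dotProduct_sub, dotProduct_smul,
    smul_eq_mul] at this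
  linarith

theorem Matrix.IsHermitian.apply_self_le {M : Matrix n n ℝ} (hM : M.IsHermitian) {ρ : ℝ}
    (hρ : ρ ∈ upperBounds {μ | ∃ x, x ≠ 0 ∧ M *ᵥ x = μ • x}) (i : n) : M i i ≤ ρ := by
  simpa [mulVec_single_one] using hM.dotProduct_mulVec_le hρ (Pi.single i 1)

end Rayleigh

/-- `ρ_α` of the star on `t` vertices: the largest root of `x² - α t x - (1 - 2α)(t - 1)`. -/
noncomputable def starSpectralRadius (α t : ℝ) : ℝ :=
  (α * t + √(α ^ 2 * t ^ 2 + 4 * (1 - 2 * α) * (t - 1))) / 2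

section StarSpectralRadius

variable {α t : ℝ}

theorem starSpectralRadius_discrim_nonneg (ht : 1 ≤ t) :
    0 ≤ α ^ 2 * t ^ 2 + 4 * (1 - 2 * α) * (t - 1) := by
  have : 0 ≤ t - 1 := by linarith
  have : 0 ≤ α ^ 2 * (t - 2) ^ 2 + 4 * (t - 1) * (1 - α) ^ 2 := by positivity
  linear_combination this

theorem starSpectralRadius_sq (ht : 1 ≤ t) :
    starSpectralRadius α t ^ 2 = α * t * starSpectralRadius α t + (1 - 2 * α) * (t - 1) := by
  unfold starSpectralRadius
  linear_combination Real.sq_sqrt (starSpectralRadius_discrim_nonneg (α := α) ht) / 4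

theorem le_starSpectralRadius (hα : 0 ≤ α) (ht : 2 ≤ t) : α ≤ starSpectralRadius α t := by
  have : 0 ≤ α * (t - 2) := mul_nonneg hα (by linarith)
  have := Real.sqrt_nonneg (α ^ 2 * t ^ 2 + 4 * (1 - 2 * α) * (t - 1))
  unfold starSpectralRadius
  linarith

theorem starSpectralRadius_two (hα : α ≤ 1) : starSpectralRadius α 2 = 1 := by
  have : α ^ 2 * 2 ^ 2 + 4 * (1 - 2 * α) * (2 - 1) = (2 * (1 - α)) ^ 2 := by ring
  rw [starSpectralRadius, this, Real.sqrt_sq (by linarith)]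
  ring

theorem starSpectralRadius_le_add {u : ℝ} (hα1 : α ≤ 1) (ht : 2 ≤ t) (htu : t ≤ u) :
    starSpectralRadius α u ≤ starSpectralRadius α t + (u - t) := by
  set D := α ^ 2 * t ^ 2 + 4 * (1 - 2 * α) * (t - 1)
  have hD : 0 ≤ D := starSpectralRadius_discrim_nonneg (by linarith)
  -- `d/dt starSpectralRadius α t ≤ 1`, cleared of the square root
  have hslope : α ^ 2 * t + 2 * (1 - 2 * α) ≤ (2 - α) * √D := by
    refine le_of_sq_le_sq ?_ (mul_nonneg (by linarith) (Real.sqrt_nonneg D))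
    have : 0 ≤ 4 * (1 - α) *
        (α ^ 2 * (t - 2) ^ 2 + 4 * (1 - α) ^ 2 * (t - 2) + (1 - α) * (3 - 2 * α)) := by
      have : 0 ≤ t - 2 := by linarith
      have : 0 ≤ 1 - α := by linarith
      have : 0 ≤ 3 - 2 * α := by linarith
      positivity
    rw [mul_pow, Real.sq_sqrt hD]
    linear_combination this
  have hsqrt : √(α ^ 2 * u ^ 2 + 4 * (1 - 2 * α) * (u - 1)) ≤ √D + (2 - α) * (u - t) := by
    have hs : 0 ≤ u - t := by linarith
    refine Real.sqrt_le_iff.mpr ⟨add_nonneg (Real.sqrt_nonneg D) (mul_nonneg (by linarith) hs), ?_⟩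
    nlinarith [mul_nonneg hs (sub_nonneg.2 hslope),
      mul_nonneg (sq_nonneg (u - t)) (sub_nonneg.2 hα1), Real.sq_sqrt hD]
  unfold starSpectralRadius
  linarith

end StarSpectralRadius

namespace SimpleGraph

variable {V : Type*} [Fintype V] [DecidableEq V] (G : SimpleGraph V) [DecidableRel G.Adj]

def alphaAdjMatrix (α : ℝ) : Matrix V V ℝ := α • G.degMatrix ℝ + (1 - α) • G.adjMatrix ℝ

theorem isHermitian_alphaAdjMatrix (α : ℝ) : (G.alphaAdjMatrix α).IsHermitian :=
  ((G.isHermitian_degMatrix ℝ).smul (IsSelfAdjoint.all α)).add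
    ((G.isHermitian_adjMatrix ℝ).smul (IsSelfAdjoint.all (1 - α)))

theorem alphaAdjMatrix_apply_self (α : ℝ) (v : V) : G.alphaAdjMatrix α v v = α * G.degree v := by
  simp [alphaAdjMatrix, degMatrix]

theorem dotProduct_alphaAdjMatrix_mulVec (α : ℝ) (x : V → ℝ) :
    x ⬝ᵥ (G.alphaAdjMatrix α *ᵥ x) =
      ∑ i, ∑ j ∈ G.neighborFinset i, x i * (α * x i + (1 - α) * x j) := by
  simp only [alphaAdjMatrix, add_mulVec, smul_mulVec, dotProduct, Pi.add_apply, Pi.smul_apply,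
    degMatrix_mulVec_apply, adjMatrix_mulVec_apply, mul_add, sum_add_distrib, ← mul_sum,
    sum_const, card_neighborFinset_eq_degree, smul_eq_mul, nsmul_eq_mul]

variable {G} in
theorem sum_neighborFinset_le_dotProduct_alphaAdjMatrix_mulVec {α : ℝ} (hα0 : 0 ≤ α)
    (hα1 : α ≤ 1) {x : V → ℝ} (hx : 0 ≤ x) (v : V) :
    ∑ w ∈ G.neighborFinset v, (α * (x v ^ 2 + x w ^ 2) + 2 * (1 - α) * x v * x w) ≤
      x ⬝ᵥ (G.alphaAdjMatrix α *ᵥ x) := by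
  set F : V → V → ℝ := fun i j => x i * (α * x i + (1 - α) * x j)
  have hF : ∀ i j, 0 ≤ F i j := fun i j =>
    mul_nonneg (hx i) (add_nonneg (mul_nonneg hα0 (hx i)) (mul_nonneg (by linarith) (hx j)))
  calc ∑ w ∈ G.neighborFinset v, (α * (x v ^ 2 + x w ^ 2) + 2 * (1 - α) * x v * x w)
      = ∑ w ∈ G.neighborFinset v, F v w + ∑ w ∈ G.neighborFinset v, F w v := by
        rw [← sum_add_distrib]; exact sum_congr rfl fun w _ => by ring
    _ ≤ ∑ w ∈ G.neighborFinset v, F v w +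
          ∑ w ∈ G.neighborFinset v, ∑ j ∈ G.neighborFinset w, F w j := by
        gcongr with w hw
        rw [mem_neighborFinset] at hw
        exact single_le_sum (fun j _ => hF w j) ((G.mem_neighborFinset w v).2 hw.symm)
    _ = ∑ i ∈ insert v (G.neighborFinset v), ∑ j ∈ G.neighborFinset i, F i j := by
        rw [sum_insert (G.notMem_neighborFinset_self v)]
    _ ≤ ∑ i, ∑ j ∈ G.neighborFinset i, F i j :=
        sum_le_sum_of_subset_of_nonneg (subset_univ _) fun i _ _ => sum_nonneg fun j _ => hF i j
    _ = x ⬝ᵥ (G.alphaAdjMatrix α *ᵥ x) := (G.dotProduct_alphaAdjMatrix_mulVec α x).symm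

variable {G} in
theorem starSpectralRadius_le {α ρ : ℝ} (hα0 : 0 ≤ α) (hα1 : α < 1)
    (hρ : ρ ∈ upperBounds {μ | ∃ x, x ≠ 0 ∧ G.alphaAdjMatrix α *ᵥ x = μ • x}) {v : V}
    (hv : 0 < G.degree v) : starSpectralRadius α (G.degree v + 1) ≤ ρ := by
  set d : ℝ := (G.degree v : ℝ)
  set g := starSpectralRadius α (d + 1)
  have hd : 1 ≤ d := Nat.one_le_cast.2 hv
  -- the Perron vector of the star at `v` takes the value `g - α` at `v` and `1 - α` at the leaves
  set a := g - α
  set b := 1 - α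
  have ha : 0 ≤ a := sub_nonneg.2 (le_starSpectralRadius hα0 (by linarith))
  have hb : 0 < b := sub_pos.2 hα1
  set x : V → ℝ := fun w => if w = v then a else if G.Adj v w then b else 0
  have hx : 0 ≤ x := fun w => by dsimp [x]; split_ifs <;> linarith
  have hxv : x v = a := if_pos rfl
  have hxN : ∀ w ∈ G.neighborFinset v, x w = b := fun w hw => by
    rw [mem_neighborFinset] at hw
    simp [x, hw, hw.ne']
  have hxx : x ⬝ᵥ x = a ^ 2 + d * b ^ 2 := by
    have : ∀ w, x w * x w = (if w = v then a ^ 2 else 0) + if G.Adj v w then b ^ 2 else 0 :=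
      fun w => by
        by_cases h : w = v
        · subst h; simp [x, sq]
        · by_cases hadj : G.Adj v w <;> simp [x, h, hadj, sq]
    simp [dotProduct, this, sum_add_distrib, Finset.sum_ite, d, ← neighborFinset_eq_filter]
  have hquad : g * (a ^ 2 + d * b ^ 2) = ∑ w ∈ G.neighborFinset v,
      (α * (x v ^ 2 + x w ^ 2) + 2 * (1 - α) * x v * x w) := by
    rw [sum_congr rfl fun w hw => by rw [hxN w hw], sum_const, card_neighborFinset_eq_degree,
      nsmul_eq_mul, hxv]
    linear_combination (g - α) * starSpectralRadius_sq (α := α) (t := d + 1) (by linarith)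
  refine le_of_mul_le_mul_right ?_ (by positivity : 0 < a ^ 2 + d * b ^ 2)
  calc g * (a ^ 2 + d * b ^ 2)
      = ∑ w ∈ G.neighborFinset v, (α * (x v ^ 2 + x w ^ 2) + 2 * (1 - α) * x v * x w) := hquad
    _ ≤ x ⬝ᵥ (G.alphaAdjMatrix α *ᵥ x) :=
        sum_neighborFinset_le_dotProduct_alphaAdjMatrix_mulVec hα0 hα1.le hx v
    _ ≤ ρ * (x ⬝ᵥ x) := (G.isHermitian_alphaAdjMatrix α).dotProduct_mulVec_le hρ x
    _ = ρ * (a ^ 2 + d * b ^ 2) := by rw [hxx]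

end SimpleGraph

theorem stmt_10 {V : Type*} [Fintype V] [DecidableEq V] (G : SimpleGraph V)
    [DecidableRel G.Adj] (hn : 2 ≤ Fintype.card V) (α : ℝ) (hα0 : 0 ≤ α) (hα1 : α < 1)
    (ρ : ℝ)
    (hρ : IsGreatest {lam : ℝ | ∃ x : V → ℝ, x ≠ 0 ∧
        (α • Matrix.diagonal (fun v => (G.degree v : ℝ)) + (1 - α) • G.adjMatrix ℝ) *ᵥ x
          = lam • x} ρ) :
    (G.maxDegree : ℝ) - ρ
      ≤ (Fintype.card V : ℝ) - 1 - α * Fintype.card V / 2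
        - Real.sqrt (α ^ 2 * (Fintype.card V : ℝ) ^ 2
            + 4 * (1 - 2 * α) * ((Fintype.card V : ℝ) - 1)) / 2 := by
  have hρ' : ρ ∈ upperBounds {μ | ∃ x, x ≠ 0 ∧ G.alphaAdjMatrix α *ᵥ x = μ • x} := hρ.2
  have hn' : (2 : ℝ) ≤ Fintype.card V := by exact_mod_cast hn
  suffices (G.maxDegree : ℝ) - ρ ≤ Fintype.card V - 1 - starSpectralRadius α (Fintype.card V) by
    rw [starSpectralRadius] at this; linarith
  have : Nonempty V := Fintype.card_pos_iff.mp (by omega)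
  obtain ⟨v, hv⟩ := G.exists_maximal_degree_vertex
  rw [hv]
  rcases Nat.eq_zero_or_pos (G.degree v) with h0 | hpos
  · have hρ0 : 0 ≤ ρ := by
      simpa [G.alphaAdjMatrix_apply_self, h0] using
        (G.isHermitian_alphaAdjMatrix α).apply_self_le hρ' v
    have := starSpectralRadius_le_add hα1.le le_rfl hn'
    rw [starSpectralRadius_two hα1.le] at this
    rw [h0]; push_cast; linarith
  · have hdeg : (G.degree v : ℝ) + 1 ≤ Fintype.card V := by
      exact_mod_cast G.degree_lt_card_verts v
    have := starSpectralRadius_le_add hα1.le (by exact_mod_cast Nat.succ_le_succ hpos) hdeg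
    linarith [G.starSpectralRadius_le hα0 hα1 hρ' hpos]
end

section
/- Let G be a finite simple graph with n vertices and m edges and eigenvalues λ₁,…,λₙ of A_α(G). Then the α-energy satisfies E_α(G) ≥ √(2·(2(1−α)²m + α²(Z(G) − 4m²/n))), where E_α(G) = Σᵢ |λᵢ − 2αm/n| and Z(G) = Σ_u deg(u)². -/
open Matrix Finset

/-!
The shifted eigenvalues `sᵢ = λᵢ - 2αm/n` sum to zero, because `tr A_α = 2αm`, and
`Σ sᵢ² = tr A_α² - (tr A_α)²/n = 2(1-α)²m + α²(Z - 4m²/n)`, because the diagonal of the adjacency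
matrix vanishes and that of its square is the degree sequence. For a zero-sum family every term is
minus the sum of the others, so `2|sᵢ| ≤ Σ|sⱼ|`; multiplying by `|sᵢ|` and summing gives
`2 Σ sᵢ² ≤ (Σ|sⱼ|)²`.
-/

namespace Finset

variable {ι R : Type*} [CommRing R] [LinearOrder R] [IsStrictOrderedRing R] {s : Finset ι}
  {f : ι → R}

theorem two_mul_abs_le_sum_abs_of_sum_eq_zero [DecidableEq ι] (hf : ∑ j ∈ s, f j = 0) {i : ι}
    (hi : i ∈ s) :
    2 * |f i| ≤ ∑ j ∈ s, |f j| := by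
  have hrest : f i = -∑ j ∈ s.erase i, f j := by
    rw [← add_sum_erase s f hi] at hf
    linarith
  have : |f i| ≤ ∑ j ∈ s.erase i, |f j| := by
    rw [hrest, abs_neg]
    exact abs_sum_le_sum_abs _ _
  rw [← add_sum_erase s _ hi]
  linarith

theorem two_mul_sum_sq_le_sq_sum_abs_of_sum_eq_zero (hf : ∑ i ∈ s, f i = 0) :
    2 * ∑ i ∈ s, f i ^ 2 ≤ (∑ i ∈ s, |f i|) ^ 2 := by
  classical
  calc 2 * ∑ i ∈ s, f i ^ 2 = ∑ i ∈ s, |f i| * (2 * |f i|) := by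
        rw [mul_sum]
        exact sum_congr rfl fun _ _ => by rw [← sq_abs]; ring
    _ ≤ ∑ i ∈ s, |f i| * ∑ j ∈ s, |f j| :=
        sum_le_sum fun i hi =>
          mul_le_mul_of_nonneg_left (two_mul_abs_le_sum_abs_of_sum_eq_zero hf hi) (abs_nonneg _)
    _ = (∑ i ∈ s, |f i|) ^ 2 := by rw [← sum_mul, sq]

theorem sqrt_two_mul_sum_sq_le_sum_abs_of_sum_eq_zero {f : ι → ℝ} (hf : ∑ i ∈ s, f i = 0) :
    √(2 * ∑ i ∈ s, f i ^ 2) ≤ ∑ i ∈ s, |f i| :=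
  Real.sqrt_le_iff.mpr ⟨sum_nonneg fun _ _ => abs_nonneg _,
    two_mul_sum_sq_le_sq_sum_abs_of_sum_eq_zero hf⟩

theorem sum_sub_sq {K : Type*} [CommRing K] (s : Finset ι) (f : ι → K) (c : K) :
    ∑ i ∈ s, (f i - c) ^ 2 = ∑ i ∈ s, f i ^ 2 - 2 * c * ∑ i ∈ s, f i + #s * c ^ 2 := by
  simp only [sub_sq, sum_add_distrib, sum_sub_distrib, ← sum_mul, ← mul_sum, sum_const,
    nsmul_eq_mul]
  ring

end Finset

namespace Matrix.IsHermitian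

variable {𝕜 n : Type*} [RCLike 𝕜] [Fintype n] [DecidableEq n] {A : Matrix n n 𝕜}

theorem trace_mul_self_eq_sum_sq_eigenvalues (hA : A.IsHermitian) :
    (A * A).trace = ∑ i, (hA.eigenvalues i : 𝕜) ^ 2 := by
  conv_lhs => rw [hA.spectral_theorem, ← map_mul, Unitary.conjStarAlgAut_apply, trace_mul_cycle,
    Unitary.coe_star_mul_self, one_mul, diagonal_mul_diagonal, trace_diagonal]
  simp [sq]

end Matrix.IsHermitian

namespace SimpleGraph

variable {V : Type*} [Fintype V] (G : SimpleGraph V) [DecidableRel G.Adj] {R : Type*} [CommRing R]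

theorem trace_adjMatrix_mul_self : (G.adjMatrix R * G.adjMatrix R).trace = 2 * #G.edgeFinset := by
  simp only [trace, diag_apply, adjMatrix_mul_self_apply_self]
  simpa using congrArg (Nat.cast (R := R)) G.sum_degrees_eq_twice_card_edges

variable [DecidableEq V]

theorem trace_degMatrix : (G.degMatrix R).trace = 2 * #G.edgeFinset := by
  rw [degMatrix, trace_diagonal]
  simpa using congrArg (Nat.cast (R := R)) G.sum_degrees_eq_twice_card_edges

theorem trace_degMatrix_mul_self :
    (G.degMatrix R * G.degMatrix R).trace = ∑ v, (G.degree v : R) ^ 2 := by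
  simp [degMatrix, diagonal_mul_diagonal, trace_diagonal, sq]

theorem trace_degMatrix_mul_adjMatrix : (G.degMatrix R * G.adjMatrix R).trace = 0 := by
  simp only [trace, diag_apply, degMatrix, diagonal_mul, adjMatrix_apply, G.irrefl, if_false,
    mul_zero, sum_const_zero]

theorem trace_smul_degMatrix_add_smul_adjMatrix (a b : R) :
    (a • G.degMatrix R + b • G.adjMatrix R).trace = a * (2 * #G.edgeFinset) := by
  simp [trace_degMatrix]

theorem trace_sq_smul_degMatrix_add_smul_adjMatrix (a b : R) :
    ((a • G.degMatrix R + b • G.adjMatrix R) * (a • G.degMatrix R + b • G.adjMatrix R)).trace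
      = a ^ 2 * ∑ v, (G.degree v : R) ^ 2 + b ^ 2 * (2 * #G.edgeFinset) := by
  have hcomm : (G.adjMatrix R * G.degMatrix R).trace = 0 := by
    rw [trace_mul_comm, trace_degMatrix_mul_adjMatrix]
  simp only [add_mul, mul_add, Matrix.smul_mul, Matrix.mul_smul, trace_add, trace_smul,
    smul_eq_mul, trace_degMatrix_mul_self, trace_degMatrix_mul_adjMatrix, hcomm,
    trace_adjMatrix_mul_self]
  ring

end SimpleGraph

theorem stmt_18 {V : Type*} [Fintype V] [DecidableEq V] [Nonempty V] (G : SimpleGraph V)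
    [DecidableRel G.Adj] (α : ℝ)
    (hA : (α • Matrix.diagonal (fun v => (G.degree v : ℝ))
      + (1 - α) • G.adjMatrix ℝ).IsHermitian) :
    Real.sqrt (2 * (2 * (1 - α) ^ 2 * G.edgeFinset.card
        + α ^ 2 * (∑ u, (G.degree u : ℝ) ^ 2
          - 4 * (G.edgeFinset.card : ℝ) ^ 2 / Fintype.card V)))
      ≤ ∑ i, |hA.eigenvalues i - 2 * α * G.edgeFinset.card / Fintype.card V| := by
  set m : ℝ := (#G.edgeFinset : ℝ)
  set n : ℝ := (Fintype.card V : ℝ)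
  have hn : n ≠ 0 := Nat.cast_ne_zero.mpr Fintype.card_ne_zero
  have hsum : ∑ i, hA.eigenvalues i = α * (2 * m) := by
    simpa using hA.trace_eq_sum_eigenvalues.symm.trans
      (G.trace_smul_degMatrix_add_smul_adjMatrix α (1 - α))
  have hsum_sq : ∑ i, hA.eigenvalues i ^ 2
      = α ^ 2 * ∑ v, (G.degree v : ℝ) ^ 2 + (1 - α) ^ 2 * (2 * m) := by
    simpa using hA.trace_mul_self_eq_sum_sq_eigenvalues.symm.trans
      (G.trace_sq_smul_degMatrix_add_smul_adjMatrix α (1 - α))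
  have hcentered : ∑ i, (hA.eigenvalues i - 2 * α * m / n) = 0 := by
    rw [sum_sub_distrib, hsum, sum_const, card_univ, nsmul_eq_mul]
    field_simp
    ring
  have hvariance : 2 * (2 * (1 - α) ^ 2 * m + α ^ 2 * (∑ v, (G.degree v : ℝ) ^ 2 - 4 * m ^ 2 / n))
      = 2 * ∑ i, (hA.eigenvalues i - 2 * α * m / n) ^ 2 := by
    rw [sum_sub_sq, hsum, hsum_sq, card_univ]
    field_simp
    ring
  rw [hvariance]
  exact sqrt_two_mul_sum_sq_le_sum_abs_of_sum_eq_zero hcentered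
end

section
/- Let B be an n×n nonnegative real matrix with row sums r₁ ≥ … ≥ rₙ, maximum diagonal entry M, and maximum off-diagonal entry N > 0. Then for each ℓ with 1 ≤ ℓ ≤ n, the spectral radius ρ(B) satisfies ρ(B) ≤ (r_ℓ + M − N + √((r_ℓ − M + N)² + 4N·Σ_{i=1}^{ℓ−1}(rᵢ − r_ℓ)))/2. -/
/-!
Put `d i := rᵢ - r_ℓ` for `i < ℓ` and `d i := 0` otherwise, so that `rᵢ ≤ r_ℓ + d i` for every `i`
and `∑ d = S := ∑_{i<ℓ} (rᵢ - r_ℓ)`. For `c > 0` the positive vector `u = c + d` satisfies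
`B u ≤ (c + M - N) u` as soon as `c (c + M - N - r_ℓ) = N S`: in row `i` the diagonal entry
meets `d i` with weight at most `M` and the other entries meet `S - d i` with weight at most `N`.
The positive root of this quadratic in `c` gives exactly the stated bound, and a positive
supervector `B u ≤ φ u` of a nonnegative matrix bounds all its eigenvalues by `φ`
(compare `|xᵢ| / uᵢ` at an index where this ratio is maximal).
-/

open Matrix Finset

theorem exists_pos_mul_eq_of_le_add {t M N S : ℝ} (hN : 0 < N) (hS : 0 ≤ S) (hMS : M ≤ t + S) :
    ∃ c, 0 < c ∧ c * (c + M - N - t) = N * S ∧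
      c + M - N = (t + M - N + √((t - M + N) ^ 2 + 4 * N * S)) / 2 := by
  set s := √((t - M + N) ^ 2 + 4 * N * S)
  have hs2 : s ^ 2 = (t - M + N) ^ 2 + 4 * N * S := Real.sq_sqrt (by positivity)
  refine ⟨(t - M + N + s) / 2, ?_, by linear_combination hs2 / 4, by ring⟩
  by_cases ha : 0 < t - M + N
  · linarith [Real.sqrt_nonneg ((t - M + N) ^ 2 + 4 * N * S)]
  · have hSN : N ≤ S := by linarith
    have : -(t - M + N) < s := Real.lt_sqrt_of_sq_lt (by nlinarith)
    linarith

namespace Matrix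

variable {ι : Type*} [Fintype ι] {B : Matrix ι ι ℝ}

theorem norm_mul_norm_le_mulVec_norm (hB : ∀ i j, 0 ≤ B i j) {μ : ℂ} {x : ι → ℂ}
    (heig : B.map (fun t => (t : ℂ)) *ᵥ x = μ • x) (i : ι) :
    ‖μ‖ * ‖x i‖ ≤ (B *ᵥ fun j => ‖x j‖) i := by
  have hrow : ∑ j, (B i j : ℂ) * x j = μ * x i := by
    simpa [mulVec, dotProduct] using congrFun heig i
  calc ‖μ‖ * ‖x i‖ = ‖∑ j, (B i j : ℂ) * x j‖ := by rw [hrow, norm_mul]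
    _ ≤ ∑ j, ‖(B i j : ℂ) * x j‖ := norm_sum_le _ _
    _ = ∑ j, B i j * ‖x j‖ := by
      simp only [norm_mul, Complex.norm_real, Real.norm_of_nonneg (hB i _)]

theorem norm_le_of_mulVec_le_smul (hB : ∀ i j, 0 ≤ B i j) {u : ι → ℝ} (hu : ∀ i, 0 < u i)
    {φ : ℝ} (hBu : ∀ i, (B *ᵥ u) i ≤ φ * u i) {μ : ℂ} {x : ι → ℂ} (hx : x ≠ 0)
    (heig : B.map (fun t => (t : ℂ)) *ᵥ x = μ • x) : ‖μ‖ ≤ φ := by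
  obtain ⟨k, hk⟩ := Function.ne_iff.mp hx
  obtain ⟨p, -, hp⟩ := exists_max_image univ (fun i => ‖x i‖ / u i) ⟨k, mem_univ k⟩
  have hratio : ∀ j, ‖x j‖ * u p ≤ ‖x p‖ * u j := fun j =>
    (div_le_div_iff₀ (hu j) (hu p)).mp (hp j (mem_univ j))
  have hxp : 0 < ‖x p‖ :=
    pos_of_mul_pos_left ((mul_pos (norm_pos_iff.mpr hk) (hu p)).trans_le (hratio k)) (hu k).le
  refine le_of_mul_le_mul_right ?_ (mul_pos hxp (hu p))
  calc ‖μ‖ * (‖x p‖ * u p) ≤ (∑ j, B p j * ‖x j‖) * u p := by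
        rw [← mul_assoc]
        exact mul_le_mul_of_nonneg_right (norm_mul_norm_le_mulVec_norm hB heig p) (hu p).le
    _ = ∑ j, B p j * (‖x j‖ * u p) := by rw [sum_mul]; simp only [mul_assoc]
    _ ≤ ∑ j, B p j * (‖x p‖ * u j) :=
        sum_le_sum fun j _ => mul_le_mul_of_nonneg_left (hratio j) (hB p j)
    _ = ‖x p‖ * (B *ᵥ u) p := by
        simp only [mulVec, dotProduct, mul_sum]; exact sum_congr rfl fun j _ => by ring
    _ ≤ ‖x p‖ * (φ * u p) := mul_le_mul_of_nonneg_left (hBu p) hxp.le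
    _ = φ * (‖x p‖ * u p) := by ring

theorem mulVec_apply_le_of_diag_le_of_offDiag_le {M N : ℝ} (hM : ∀ i, B i i ≤ M)
    (hN : ∀ i j, i ≠ j → B i j ≤ N) {d : ι → ℝ} (hd : ∀ i, 0 ≤ d i) (i : ι) :
    (B *ᵥ d) i ≤ M * d i + N * (∑ j, d j - d i) := by
  classical
  have hoff : ∑ j ∈ univ.erase i, B i j * d j ≤ ∑ j ∈ univ.erase i, N * d j :=
    sum_le_sum fun j hj => mul_le_mul_of_nonneg_right (hN i j (ne_of_mem_erase hj).symm) (hd j)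
  rw [← mul_sum, sum_erase_eq_sub (f := d) (mem_univ i)] at hoff
  calc (B *ᵥ d) i = B i i * d i + ∑ j ∈ univ.erase i, B i j * d j :=
        (add_sum_erase _ _ (mem_univ i)).symm
    _ ≤ M * d i + N * (∑ j, d j - d i) :=
        add_le_add (mul_le_mul_of_nonneg_right (hM i) (hd i)) hoff

theorem mulVec_const_add_le {M N : ℝ} (hM : ∀ i, B i i ≤ M) (hN : ∀ i j, i ≠ j → B i j ≤ N)
    {d : ι → ℝ} (hd : ∀ i, 0 ≤ d i) {t c : ℝ} (hc : 0 ≤ c) (hrd : ∀ i, ∑ j, B i j ≤ t + d i)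
    (hcS : c * (c + M - N - t) = N * ∑ j, d j) (i : ι) :
    (B *ᵥ fun j => c + d j) i ≤ (c + M - N) * (c + d i) := by
  have hsplit : (B *ᵥ fun j => c + d j) i = (∑ j, B i j) * c + (B *ᵥ d) i := by
    simp only [mulVec, dotProduct, mul_add, sum_add_distrib, sum_mul]
  have hBd := mulVec_apply_le_of_diag_le_of_offDiag_le hM hN hd i
  have hcr := mul_le_mul_of_nonneg_left (hrd i) hc
  rw [hsplit]
  linarith

theorem norm_le_of_rowSum_le_add (hB : ∀ i j, 0 ≤ B i j) {M N : ℝ}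
    (hM : IsGreatest (Set.range B.diag) M) (hN : ∀ i j, i ≠ j → B i j ≤ N) (hNpos : 0 < N)
    {d : ι → ℝ} (hd : ∀ i, 0 ≤ d i) {t : ℝ} (hrd : ∀ i, ∑ j, B i j ≤ t + d i)
    {μ : ℂ} {x : ι → ℂ} (hx : x ≠ 0) (heig : B.map (fun t => (t : ℂ)) *ᵥ x = μ • x) :
    ‖μ‖ ≤ (t + M - N + √((t - M + N) ^ 2 + 4 * N * ∑ i, d i)) / 2 := by
  obtain ⟨m, hm⟩ := hM.1
  have hMS : M ≤ t + ∑ i, d i :=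
    calc M = B m m := hm.symm
      _ ≤ ∑ j, B m j := single_le_sum (fun j _ => hB m j) (mem_univ m)
      _ ≤ t + d m := hrd m
      _ ≤ t + ∑ i, d i := by gcongr; exact single_le_sum (fun i _ => hd i) (mem_univ m)
  obtain ⟨c, hc, hcS, hφ⟩ := exists_pos_mul_eq_of_le_add hNpos (sum_nonneg fun i _ => hd i) hMS
  rw [← hφ]
  exact norm_le_of_mulVec_le_smul hB (fun i => add_pos_of_pos_of_nonneg hc (hd i))
    (mulVec_const_add_le (B := B) (fun i => hM.2 ⟨i, rfl⟩) hN hd hc.le hrd hcS) hx heig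

end Matrix

theorem stmt_19_general (n : ℕ) (B : Matrix (Fin n) (Fin n) ℝ)
    (hB : ∀ i j, 0 ≤ B i j)
    (r : Fin n → ℝ) (hr : ∀ i, r i = ∑ j, B i j)
    (hmono : ∀ i j : Fin n, i ≤ j → r j ≤ r i)
    (M N : ℝ)
    (hM : IsGreatest {m : ℝ | ∃ i, B i i = m} M)
    (hN : IsGreatest {m : ℝ | ∃ i j, i ≠ j ∧ B i j = m} N)
    (hNpos : 0 < N)
    (ℓ : Fin n) (μ : ℂ) (x : Fin n → ℂ) (hx : x ≠ 0)
    (heig : (B.map (fun t => (t : ℂ))) *ᵥ x = μ • x) :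
    ‖μ‖
      ≤ (r ℓ + M - N
          + Real.sqrt ((r ℓ - M + N) ^ 2 + 4 * N * ∑ i ∈ Finset.Iio ℓ, (r i - r ℓ))) / 2 := by
  set d : Fin n → ℝ := fun i => if i < ℓ then r i - r ℓ else 0
  have hd : ∀ i, 0 ≤ d i := fun i => by
    by_cases h : i < ℓ
    · simpa [d, h] using hmono i ℓ h.le
    · simp [d, h]
  have hrd : ∀ i, ∑ j, B i j ≤ r ℓ + d i := fun i => by
    by_cases h : i < ℓ
    · simp [d, h, hr i]
    · simpa [d, h, hr i] using hmono ℓ i (not_lt.mp h)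
  have hsum : ∑ i, d i = ∑ i ∈ Iio ℓ, (r i - r ℓ) := by rw [← filter_gt_eq_Iio, sum_filter]
  rw [← hsum]
  exact norm_le_of_rowSum_le_add hB hM (fun i j hij => hN.2 ⟨i, j, hij, rfl⟩) hNpos hd hrd hx heig

theorem stmt_19 (n : ℕ) (hn : 1 ≤ n) (B : Matrix (Fin n) (Fin n) ℝ)
    (hB : ∀ i j, 0 ≤ B i j)
    (r : Fin n → ℝ) (hr : ∀ i, r i = ∑ j, B i j)
    (hmono : ∀ i j : Fin n, i ≤ j → r j ≤ r i)
    (M N : ℝ)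
    (hM : IsGreatest {m : ℝ | ∃ i, B i i = m} M)
    (hN : IsGreatest {m : ℝ | ∃ i j, i ≠ j ∧ B i j = m} N)
    (hNpos : 0 < N)
    (ℓ : Fin n) (μ : ℂ) (x : Fin n → ℂ) (hx : x ≠ 0)
    (heig : (B.map (fun t => (t : ℂ))) *ᵥ x = μ • x) :
    ‖μ‖
      ≤ (r ℓ + M - N
          + Real.sqrt ((r ℓ - M + N) ^ 2 + 4 * N * ∑ i ∈ Finset.Iio ℓ, (r i - r ℓ))) / 2 :=
  stmt_19_general n B hB r hr hmono M N hM hN hNpos ℓ μ x hx heig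
end
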